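/- arXiv:math/0505383 — 5 statements merged into one kernel-verified Lean document; each statement's English description precedes it below -/
import Mathlib

section
/- Let k ≥ 27 e^{-3}/4 and define f_k(t) = (1 - k t^{-2})^{1/2} (1 + e^{-2t}) for t ≥ k^{1/2}. Then f_k is nondecreasing on [k^{1/2}, ∞). -/
lemma key_ineq (t : ℝ) (ht : 0 ≤ t) :
    2 * t ^ 3 * Real.exp (-2 * t) ≤ 27 * Real.exp (-3) / 4 := by
  have hx : (2 * t / 3) * Real.exp (1 - 2 * t / 3) ≤ 1 := by
    have h1 := Real.add_one_le_exp (2 * t / 3 - 1)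
    have h2 : Real.exp (2 * t / 3 - 1) * Real.exp (1 - 2 * t / 3) = 1 := by
      rw [← Real.exp_add]; norm_num
    nlinarith [Real.exp_pos (1 - 2 * t / 3)]
  have hnn : 0 ≤ (2 * t / 3) * Real.exp (1 - 2 * t / 3) := by positivity
  have hcube : ((2 * t / 3) * Real.exp (1 - 2 * t / 3)) ^ 3 ≤ 1 := by
    calc ((2 * t / 3) * Real.exp (1 - 2 * t / 3)) ^ 3 ≤ 1 ^ 3 := by
          exact pow_le_pow_left₀ hnn hx 3
      _ = 1 := one_pow 3
  have hexp3 : (Real.exp (1 - 2 * t / 3)) ^ 3 = Real.exp 3 * Real.exp (-2 * t) := by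
    rw [← Real.exp_nat_mul, ← Real.exp_add]; ring_nf
  have h3 : Real.exp 3 * Real.exp (-3) = 1 := by rw [← Real.exp_add]; norm_num
  have he3 := Real.exp_pos (3 : ℝ)
  have hem3 := Real.exp_pos (-3 : ℝ)
  have hcube' : (2 * t / 3) ^ 3 * (Real.exp 3 * Real.exp (-2 * t)) ≤ 1 := by
    calc (2 * t / 3) ^ 3 * (Real.exp 3 * Real.exp (-2 * t))
        = ((2 * t / 3) * Real.exp (1 - 2 * t / 3)) ^ 3 := by rw [mul_pow, hexp3]
      _ ≤ 1 := hcube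
  nlinarith [Real.exp_pos (-2 * t)]

theorem stmt_1 (k : ℝ) (hk : 27 * Real.exp (-3) / 4 ≤ k) :
    MonotoneOn (fun t : ℝ => Real.sqrt (1 - k / t ^ 2) * (1 + Real.exp (-2 * t)))
      (Set.Ici (Real.sqrt k)) := by
  have hk0 : 0 < k := lt_of_lt_of_le (by positivity) hk
  have hsk : 0 < Real.sqrt k := Real.sqrt_pos.mpr hk0
  -- facts for points of Ici √k
  have hpt : ∀ t ∈ Set.Ici (Real.sqrt k), 0 < t ∧ k ≤ t ^ 2 := by
    intro t ht
    have ht' : Real.sqrt k ≤ t := ht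
    have h1 : 0 < t := lt_of_lt_of_le hsk ht'
    have h2 : k ≤ t ^ 2 := by
      have := Real.sq_sqrt hk0.le
      nlinarith [Real.sqrt_nonneg k]
    exact ⟨h1, h2⟩
  set g : ℝ → ℝ := fun t => (1 - k / t ^ 2) * (1 + Real.exp (-2 * t)) ^ 2 with hgdef
  have hder : ∀ t : ℝ, 0 < t → HasDerivAt g
      (2 * k / t ^ 3 * (1 + Real.exp (-2 * t)) ^ 2
        + (1 - k / t ^ 2) * (2 * (1 + Real.exp (-2 * t)) * (-2 * Real.exp (-2 * t)))) t := by
    intro t ht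
    have ht2 : t ^ 2 ≠ 0 := by positivity
    have h1 : HasDerivAt (fun t : ℝ => 1 - k / t ^ 2) (2 * k / t ^ 3) t := by
      have hp : HasDerivAt (fun t : ℝ => t ^ 2) (2 * t) t := by
        simpa using (hasDerivAt_pow 2 t)
      have hd := (hasDerivAt_const t k).div hp ht2
      have := (hasDerivAt_const t (1 : ℝ)).sub hd
      refine this.congr_deriv ?_
      field_simp
      ring
    have h2 : HasDerivAt (fun t : ℝ => (1 + Real.exp (-2 * t)) ^ 2)
        (2 * (1 + Real.exp (-2 * t)) * (-2 * Real.exp (-2 * t))) t := by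
      have he : HasDerivAt (fun t : ℝ => 1 + Real.exp (-2 * t)) (-2 * Real.exp (-2 * t)) t := by
        have h0 : HasDerivAt (fun t : ℝ => -2 * t) (-2) t := by
          simpa using (hasDerivAt_id t).const_mul (-2 : ℝ)
        have := (hasDerivAt_const t (1 : ℝ)).add h0.exp
        refine this.congr_deriv ?_
        ring
      have := he.pow 2
      refine this.congr_deriv ?_
      ring
    exact h1.mul h2
  have hgmono : MonotoneOn g (Set.Ici (Real.sqrt k)) := by
    apply monotoneOn_of_deriv_nonneg (convex_Ici _)
    · intro t ht
      exact ((hder t (hpt t ht).1).continuousAt).continuousWithinAt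
    · intro t ht
      rw [interior_Ici] at ht
      have ht0 : 0 < t := (hpt t (Set.mem_Ici.mpr (le_of_lt ht))).1
      exact (hder t ht0).differentiableAt.differentiableWithinAt
    · intro t ht
      rw [interior_Ici] at ht
      obtain ⟨ht0, hkt2⟩ := hpt t (Set.mem_Ici.mpr (le_of_lt ht))
      rw [(hder t ht0).deriv]
      set a := Real.exp (-2 * t) with ha
      have ha0 : 0 < a := Real.exp_pos _
      have hkey : 2 * t ^ 3 * a ≤ k := le_trans (key_ineq t ht0.le) hk
      have ht3 : (0:ℝ) < t ^ 3 := by positivity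
      have h2a : 2 * a ≤ k / t ^ 3 := by
        rw [le_div_iff₀ ht3]; nlinarith
      have hfrac : k / t ^ 2 ≤ 1 := by
        rw [div_le_one (by positivity)]; linarith
      have hfrac0 : 0 ≤ 1 - k / t ^ 2 := by linarith
      have hc0 : 0 < k / t ^ 3 := by positivity
      have hA : (0:ℝ) < 1 + a := by linarith
      have hq : (0:ℝ) ≤ k / t ^ 2 := by positivity
      have s1 : 4 * a * (1 + a) * (1 - k / t ^ 2) ≤ 4 * a * (1 + a) := by
        nlinarith [mul_pos ha0 hA]
      have s2 : 4 * a * (1 + a) ≤ 2 * (k / t ^ 3) * (1 + a) := by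
        nlinarith [mul_le_mul_of_nonneg_right h2a (by positivity : (0:ℝ) ≤ 2 * (1 + a))]
      have s3 : 2 * (k / t ^ 3) * (1 + a) ≤ 2 * (k / t ^ 3) * (1 + a) ^ 2 := by
        nlinarith [mul_pos hc0 (mul_pos ha0 hA)]
      have hring : 2 * k / t ^ 3 * (1 + a) ^ 2
            + (1 - k / t ^ 2) * (2 * (1 + a) * (-2 * a))
          = 2 * (k / t ^ 3) * (1 + a) ^ 2 - 4 * a * (1 + a) * (1 - k / t ^ 2) := by
        ring
      rw [hring]
      linarith
  -- transfer to f = sqrt ∘ g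
  intro x hx y hy hxy
  obtain ⟨hx0, hxk⟩ := hpt x hx
  obtain ⟨hy0, hyk⟩ := hpt y hy
  have hfx : ∀ t : ℝ, 0 < t → k ≤ t ^ 2 →
      Real.sqrt (1 - k / t ^ 2) * (1 + Real.exp (-2 * t)) = Real.sqrt (g t) := by
    intro t ht0 hkt
    have h1 : (0:ℝ) ≤ 1 - k / t ^ 2 := by
      have : k / t ^ 2 ≤ 1 := by rw [div_le_one (by positivity)]; linarith
      linarith
    have h2 : (0:ℝ) ≤ 1 + Real.exp (-2 * t) := by positivity
    rw [hgdef]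
    simp only
    rw [Real.sqrt_mul h1, Real.sqrt_sq h2]
  simp only
  rw [hfx x hx0 hxk, hfx y hy0 hyk]
  exact Real.sqrt_le_sqrt (hgmono hx hy hxy)
end

section
/- Let k ≥ 27 e^{-3}/4 and f_k(t) = (1 - k t^{-2})^{1/2}(1 + e^{-2t}) for t ≥ k^{1/2}. Then f_k(t) ≤ 1 for all t ≥ k^{1/2}. -/
/-! Since √(1 - x) ≤ 1 - x/2, it suffices that e^{-2t} ≤ k / (2t²). This follows from
t e^{-t} ≤ e^{-1}, which gives t² e^{-2t} ≤ e^{-2}, together with 2 e^{-2} ≤ 27 e^{-3}/4,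
i.e. e ≤ 27/8. -/

open Real

lemma sq_mul_exp_neg_two_mul_le {t : ℝ} (ht : 0 ≤ t) : t ^ 2 * exp (-2 * t) ≤ exp (-2) := by
  have h := pow_le_pow_left₀ (by positivity) (mul_exp_neg_le_exp_neg_one t) 2
  rwa [mul_pow, ← exp_nat_mul, ← exp_nat_mul, Nat.cast_ofNat, mul_neg, mul_neg_one,
    ← neg_mul] at h

lemma two_mul_exp_neg_two_le : 2 * exp (-2) ≤ 27 * exp (-3) / 4 := by
  have he : exp 1 ≤ 27 / 8 := by linarith [exp_one_lt_d9]
  have hsplit : exp (-2) = exp (-3) * exp 1 := by rw [← exp_add]; norm_num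
  rw [hsplit]
  nlinarith [exp_pos (-3)]

theorem stmt_2 (k : ℝ) (hk : 27 * Real.exp (-3) / 4 ≤ k) (t : ℝ)
    (ht : Real.sqrt k ≤ t) :
    Real.sqrt (1 - k / t ^ 2) * (1 + Real.exp (-2 * t)) ≤ 1 := by
  have hk0 : 0 < k := lt_of_lt_of_le (by positivity) hk
  have ht0 : 0 < t := (sqrt_pos.2 hk0).trans_le ht
  have hkt : k ≤ t ^ 2 := (sqrt_le_left ht0.le).1 ht
  set x := k / t ^ 2
  have hx0 : 0 ≤ x := by positivity
  have hx1 : x ≤ 1 := div_le_one_of_le₀ hkt (sq_nonneg t)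
  have hexp : exp (-2 * t) ≤ x / 2 := by
    rw [div_div, le_div_iff₀ (by positivity)]
    nlinarith [sq_mul_exp_neg_two_mul_le ht0.le, two_mul_exp_neg_two_le]
  calc √(1 - x) * (1 + exp (-2 * t))
      ≤ (1 - x / 2) * (1 + exp (-2 * t)) := by
        gcongr
        simpa [sub_eq_add_neg, neg_div] using sqrt_one_add_le (x := -x) (by linarith)
    _ ≤ 1 := by nlinarith [exp_pos (-2 * t)]
end

section
/- For every u in the Sobolev space H^1(ℝ) and every γ > 0, one has 2γ(|u(-1)|^2 + |u(1)|^2) ≤ (1 + e^{-2γ}) ∫_ℝ (|u'(x)|^2 + γ^2 |u(x)|^2) dx. -/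
open MeasureTheory Filter Set

lemma lim_eq_zero_atTop (v : ℝ → ℝ) (hv : Integrable v) {L : ℝ}
    (h : Tendsto v atTop (nhds L)) : L = 0 := by
  by_contra hL
  have hev : ∀ᶠ x in atTop, |L| / 2 ≤ |v x| := by
    filter_upwards [h.eventually (Metric.ball_mem_nhds L (by positivity : (0:ℝ) < |L|/2))]
      with x hx
    have h1 : |v x - L| < |L| / 2 := by simpa [Real.dist_eq] using hx
    have h2 := abs_sub_abs_le_abs_sub L (v x)
    rw [abs_sub_comm] at h2
    linarith
  obtain ⟨M, hM⟩ := eventually_atTop.1 hev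
  have hc : IntegrableOn (fun _ : ℝ => |L| / 2) (Ioi M) := by
    apply Integrable.mono hv.integrableOn aestronglyMeasurable_const
    filter_upwards [ae_restrict_mem measurableSet_Ioi] with x hx
    simpa [abs_of_nonneg, Real.norm_eq_abs, abs_abs] using hM x hx.le
  rw [integrableOn_const_iff, enorm_eq_zero] at hc
  rcases hc with hc | hc
  · exact hL (by simpa using abs_eq_zero.mp (by linarith [abs_nonneg L] : |L| = 0))
  · simp [Real.volume_Ioi] at hc

lemma lim_eq_zero_atBot (v : ℝ → ℝ) (hv : Integrable v) {L : ℝ}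
    (h : Tendsto v atBot (nhds L)) : L = 0 := by
  apply lim_eq_zero_atTop (fun x => v (-x)) hv.comp_neg
  exact h.comp tendsto_neg_atTop_atBot

/-- The trace inequality `2γ(|u(-1)|² + |u(1)|²) ≤ (1+e^{-2γ}) ∫ (|u'|² + γ²|u|²)`
for `u ∈ H¹(ℝ)` (represented by its continuous, everywhere differentiable
representative with square-integrable derivative). -/
theorem stmt_3 (γ : ℝ) (hγ : 0 < γ) (u u' : ℝ → ℝ)
    (hderiv : ∀ x, HasDerivAt u (u' x) x)
    (hu : Integrable (fun x => u x ^ 2))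
    (hu' : Integrable (fun x => u' x ^ 2)) :
    2 * γ * (u (-1) ^ 2 + u 1 ^ 2) ≤
      (1 + Real.exp (-2 * γ)) * ∫ x : ℝ, (u' x ^ 2 + γ ^ 2 * u x ^ 2) := by
  set c : ℝ → ℝ := fun x => Real.cosh (γ * x) with hc
  set s : ℝ → ℝ := fun x => Real.sinh (γ * x) with hs
  have hcpos : ∀ x, 0 < c x := fun x => Real.cosh_pos _
  have hid : ∀ x, c x ^ 2 - s x ^ 2 = 1 := fun x => Real.cosh_sq_sub_sinh_sq _
  have hc1 : ∀ x, 1 ≤ c x := fun x => Real.one_le_cosh _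
  have hsc : ∀ x, |s x| ≤ c x := by
    intro x
    nlinarith [sq_abs (s x), hid x, hcpos x, abs_nonneg (s x)]
  set v : ℝ → ℝ := fun x => u x ^ 2 with hv
  set w : ℝ → ℝ := fun x => 2 * u x * u' x with hw
  have hvd : ∀ x, HasDerivAt v (w x) x := by
    intro x
    simpa [hw, pow_one] using (hderiv x).fun_pow 2
  have hum : AEStronglyMeasurable u volume :=
    (continuous_iff_continuousAt.2 fun x => (hderiv x).continuousAt).aestronglyMeasurable
  have hu'm : AEStronglyMeasurable u' volume := by
    have h : u' = deriv u := funext fun x => ((hderiv x).deriv).symm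
    rw [h]; exact (measurable_deriv u).aestronglyMeasurable
  have hsum : Integrable (fun x => u x ^ 2 + u' x ^ 2) := hu.add hu'
  have hwabs : ∀ x, |w x| ≤ u x ^ 2 + u' x ^ 2 := by
    intro x
    calc |w x| = 2 * |u x| * |u' x| := by
          rw [hw]; rw [abs_mul, abs_mul]; simp [abs_of_nonneg]
      _ ≤ |u x| ^ 2 + |u' x| ^ 2 := two_mul_le_add_sq _ _
      _ = u x ^ 2 + u' x ^ 2 := by rw [sq_abs, sq_abs]
  have hwi : Integrable w := by
    refine hsum.mono ((aestronglyMeasurable_const.mul hum).mul hu'm) ?_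
    filter_upwards with x
    simp only [Real.norm_eq_abs]
    rw [abs_of_nonneg (by positivity : (0:ℝ) ≤ u x ^ 2 + u' x ^ 2)]
    exact hwabs x
  -- limits of v at ±∞
  have htop : Tendsto v atTop (nhds 0) := by
    have h := tendsto_limUnder_of_hasDerivAt_of_integrableOn_Ioi (a := 0)
      (fun x (_ : x ∈ Ioi (0:ℝ)) => hvd x) hwi.integrableOn
    rwa [lim_eq_zero_atTop v hu h] at h
  have hbot : Tendsto v atBot (nhds 0) := by
    have h := tendsto_limUnder_of_hasDerivAt_of_integrableOn_Iic (a := 0)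
      (fun x (_ : x ∈ Iic (0:ℝ)) => hvd x) hwi.integrableOn
    rwa [lim_eq_zero_atBot v hu h] at h
  have hIoi : ∫ x in Ioi (1:ℝ), w x = 0 - v 1 :=
    integral_Ioi_of_hasDerivAt_of_tendsto' (fun x _ => hvd x) hwi.integrableOn htop
  have hIic : ∫ x in Iic (-1:ℝ), w x = v (-1) - 0 :=
    integral_Iic_of_hasDerivAt_of_tendsto' (fun x _ => hvd x) hwi.integrableOn hbot
  set f : ℝ → ℝ := fun x => u' x ^ 2 + γ ^ 2 * u x ^ 2 with hf
  have hfi : Integrable f := hu'.add (hu.const_mul _)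
  -- tail bounds
  have hC : γ * u 1 ^ 2 ≤ ∫ x in Ioi (1:ℝ), f x := by
    have hmono : ∫ x in Ioi (1:ℝ), (-γ) * w x ≤ ∫ x in Ioi (1:ℝ), f x := by
      apply setIntegral_mono_on (hwi.const_mul (-γ)).integrableOn hfi.integrableOn
        measurableSet_Ioi
      intro x _
      simp only [hw, hf]
      nlinarith [sq_nonneg (u' x + γ * u x)]
    have h2 : ∫ x in Ioi (1:ℝ), (-γ) * w x = γ * u 1 ^ 2 := by
      rw [integral_const_mul, hIoi]; simp only [hv]; ring
    linarith
  have hA : γ * u (-1) ^ 2 ≤ ∫ x in Iic (-1:ℝ), f x := by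
    have hmono : ∫ x in Iic (-1:ℝ), γ * w x ≤ ∫ x in Iic (-1:ℝ), f x := by
      apply setIntegral_mono_on (hwi.const_mul γ).integrableOn hfi.integrableOn
        measurableSet_Iic
      intro x _
      simp only [hw, hf]
      nlinarith [sq_nonneg (u' x - γ * u x)]
    have h2 : ∫ x in Iic (-1:ℝ), γ * w x = γ * u (-1) ^ 2 := by
      rw [integral_const_mul, hIic]; simp only [hv]; ring
    linarith
  -- middle
  set g : ℝ → ℝ := fun x => γ * (s x / c x) * v x with hg
  set g' : ℝ → ℝ := fun x => γ * (γ / c x ^ 2) * v x + γ * (s x / c x) * w x with hg'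
  have hgd : ∀ x, HasDerivAt g (g' x) x := by
    intro x
    have hsx : HasDerivAt s (γ * c x) x := by
      simpa [hs, hc, Function.comp_def, mul_comm] using
        (Real.hasDerivAt_sinh (γ * x)).comp x ((hasDerivAt_id x).const_mul γ)
    have hcx : HasDerivAt c (γ * s x) x := by
      simpa [hs, hc, Function.comp_def, mul_comm] using
        (Real.hasDerivAt_cosh (γ * x)).comp x ((hasDerivAt_id x).const_mul γ)
    have hq : HasDerivAt (fun y => s y / c y)
        ((γ * c x * c x - s x * (γ * s x)) / c x ^ 2) x := hsx.div hcx (hcpos x).ne'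
    have e : γ * c x * c x - s x * (γ * s x) = γ := by linear_combination γ * hid x
    rw [e] at hq
    exact (hq.const_mul γ).mul (hvd x)
  have hgf : ∀ x, g' x ≤ f x := by
    intro x
    have hcne : c x ≠ 0 := (hcpos x).ne'
    rw [← sub_nonneg]
    have heq : f x - g' x = (u' x - γ * (s x / c x) * u x) ^ 2 := by
      simp only [hf, hg', hv, hw]
      have hcne : c x ≠ 0 := (hcpos x).ne'
      have h2 : c x ^ 2 ≠ 0 := pow_ne_zero _ hcne
      field_simp
      linear_combination (γ ^ 2 * u x ^ 2) * hid x
    rw [heq]; positivity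
  have hg'i : Integrable g' := by
    have hmeas : AEStronglyMeasurable g' volume := by
      have hcc : Continuous c := Real.continuous_cosh.comp (continuous_const.mul continuous_id)
      have hcs : Continuous s := Real.continuous_sinh.comp (continuous_const.mul continuous_id)
      apply AEStronglyMeasurable.add
      · exact (continuous_const.mul (continuous_const.div (hcc.pow 2)
          (fun x => pow_ne_zero _ (hcpos x).ne'))).aestronglyMeasurable.mul hu.1
      · exact ((continuous_const.mul (hcs.div hcc fun x =>
          (hcpos x).ne')).aestronglyMeasurable).mul hwi.1
    refine (hsum.const_mul (γ ^ 2 + γ)).mono hmeas ?_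
    filter_upwards with x
    simp only [Real.norm_eq_abs]
    have h1 : |γ * (γ / c x ^ 2) * v x| ≤ γ ^ 2 * v x := by
      rw [abs_of_nonneg (by positivity)]
      simp only [hv]
      have hle : γ / c x ^ 2 ≤ γ := by
        rw [div_le_iff₀ (by positivity)]
        nlinarith [mul_le_mul (hc1 x) (hc1 x) zero_le_one (le_trans zero_le_one (hc1 x)), hγ]
      nlinarith [mul_le_mul_of_nonneg_left hle hγ.le, sq_nonneg (u x),
        div_nonneg hγ.le (sq_nonneg (c x))]
    have h2 : |γ * (s x / c x) * w x| ≤ γ * (u x ^ 2 + u' x ^ 2) := by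
      rw [abs_mul, abs_mul, abs_of_nonneg hγ.le]
      have ht : |s x / c x| ≤ 1 := by
        rw [abs_div, abs_of_pos (hcpos x), div_le_one (hcpos x)]
        exact hsc x
      calc γ * |s x / c x| * |w x| ≤ γ * 1 * |w x| := by
            apply mul_le_mul_of_nonneg_right _ (abs_nonneg _)
            exact mul_le_mul_of_nonneg_left ht hγ.le
        _ = γ * |w x| := by ring
        _ ≤ γ * (u x ^ 2 + u' x ^ 2) := mul_le_mul_of_nonneg_left (hwabs x) hγ.le
    have hnn : (0:ℝ) ≤ u x ^ 2 + u' x ^ 2 := by positivity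
    rw [abs_of_nonneg (by positivity : (0:ℝ) ≤ (γ^2+γ) * (u x ^ 2 + u' x ^ 2))]
    calc |g' x| ≤ |γ * (γ / c x ^ 2) * v x| + |γ * (s x / c x) * w x| := abs_add_le _ _
      _ ≤ γ ^ 2 * v x + γ * (u x ^ 2 + u' x ^ 2) := add_le_add h1 h2
      _ ≤ (γ ^ 2 + γ) * (u x ^ 2 + u' x ^ 2) := by
        simp only [hv]
        nlinarith [mul_nonneg (sq_nonneg γ) (sq_nonneg (u' x))]
  have hB : γ * (Real.sinh γ / Real.cosh γ) * (u (-1) ^ 2 + u 1 ^ 2)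
      ≤ ∫ x in Ioc (-1:ℝ) 1, f x := by
    have h1 : ∫ x in Ioc (-1:ℝ) 1, g' x ≤ ∫ x in Ioc (-1:ℝ) 1, f x :=
      setIntegral_mono_on hg'i.integrableOn hfi.integrableOn measurableSet_Ioc
        fun x _ => hgf x
    have h2 : ∫ x in Ioc (-1:ℝ) 1, g' x = g 1 - g (-1) := by
      rw [← intervalIntegral.integral_of_le (by norm_num : (-1:ℝ) ≤ 1)]
      exact intervalIntegral.integral_eq_sub_of_hasDerivAt (fun x _ => hgd x)
        hg'i.intervalIntegrable
    have h3 : g 1 - g (-1) = γ * (Real.sinh γ / Real.cosh γ) * (u (-1) ^ 2 + u 1 ^ 2) := by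
      simp [hg, hs, hc, hv, Real.sinh_neg, Real.cosh_neg]
      ring
    rw [h2, h3] at h1
    exact h1
  -- split the integral
  have hsplit : (∫ x in Iic (-1:ℝ), f x) + (∫ x in Ioc (-1:ℝ) 1, f x) + (∫ x in Ioi (1:ℝ), f x)
      = ∫ x, f x := by
    have h1 : (∫ x in Ioc (-1:ℝ) 1, f x) + (∫ x in Ioi (1:ℝ), f x)
        = ∫ x in Ioi (-1:ℝ), f x := by
      rw [← setIntegral_union (Ioc_disjoint_Ioi le_rfl) measurableSet_Ioi
        hfi.integrableOn hfi.integrableOn,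
        Ioc_union_Ioi_eq_Ioi (by norm_num : (-1:ℝ) ≤ 1)]
    rw [add_assoc, h1, intervalIntegral.integral_Iic_add_Ioi hfi.integrableOn hfi.integrableOn]
  -- key algebraic identity
  set T : ℝ := Real.sinh γ / Real.cosh γ with hT
  have hkey : (1 + Real.exp (-2 * γ)) * (1 + T) = 2 := by
    have hcγ : (0:ℝ) < Real.cosh γ := Real.cosh_pos γ
    have hne : Real.exp γ + Real.exp (-γ) ≠ 0 := by positivity
    have h1 : Real.exp (-2 * γ) = Real.exp (-γ) * Real.exp (-γ) := by
      rw [← Real.exp_add]; ring_nf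
    have h2 : Real.exp γ * Real.exp (-γ) = 1 := by rw [← Real.exp_add]; simp
    rw [hT, Real.sinh_eq, Real.cosh_eq, h1]
    field_simp
    linear_combination (2 * Real.exp (-γ)) * h2
  have hTpos : 0 ≤ T := by
    rw [hT]
    exact div_nonneg ((Real.sinh_pos_iff.2 hγ).le) (Real.cosh_pos γ).le
  have hEpos : (0:ℝ) < 1 + Real.exp (-2 * γ) := by positivity
  have hge : γ * u (-1) ^ 2 + γ * T * (u (-1) ^ 2 + u 1 ^ 2) + γ * u 1 ^ 2 ≤ ∫ x, f x := by
    rw [← hsplit]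
    linarith [hA, hB, hC]
  calc 2 * γ * (u (-1) ^ 2 + u 1 ^ 2)
      = (1 + Real.exp (-2 * γ)) *
        (γ * u (-1) ^ 2 + γ * T * (u (-1) ^ 2 + u 1 ^ 2) + γ * u 1 ^ 2) := by
        linear_combination (-(γ * (u (-1) ^ 2 + u 1 ^ 2))) * hkey
    _ ≤ (1 + Real.exp (-2 * γ)) * ∫ x, f x :=
        mul_le_mul_of_nonneg_left hge hEpos.le
end

section
/- For every γ > 0, the constant (1 + e^{-2γ}) in the trace inequality 2γ(|u(-1)|^2 + |u(1)|^2) ≤ C ∫_ℝ (|u'|^2 + γ^2|u|^2) dx is sharp: equality is attained by the function v(x) = e^{-γ|x-1|} + e^{-γ|x+1|}. -/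
open MeasureTheory Set Filter
open scoped Topology

noncomputable def Ffun (γ : ℝ) : ℝ → ℝ := fun x =>
  if x ≤ -1 then (2*γ^2*(Real.exp (-γ) + Real.exp γ)^2) * Real.exp (2*γ*x)
  else if x ≤ 1 then (2*γ^2*Real.exp (-γ)^2) * (Real.exp (2*γ*x) + Real.exp (-(2*γ*x)))
  else (2*γ^2*(Real.exp (-γ) + Real.exp γ)^2) * Real.exp (-(2*γ*x))

lemma hasDerivAt_exp_mul (b x : ℝ) (hb : b ≠ 0) :
    HasDerivAt (fun y : ℝ => Real.exp (b * y) / b) (Real.exp (b * x)) x := by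
  have h : HasDerivAt (fun y : ℝ => Real.exp (b * y)) (Real.exp (b * x) * (b * 1)) x :=
    ((hasDerivAt_id x).const_mul b).exp
  have h2 := h.div_const b
  refine h2.congr_deriv ?_
  field_simp

lemma hasDerivAt_exp_neg_mul (b x : ℝ) (hb : b ≠ 0) :
    HasDerivAt (fun y : ℝ => -(Real.exp (-(b * y)) / b)) (Real.exp (-(b * x))) x := by
  have h : HasDerivAt (fun y : ℝ => Real.exp (-(b * y))) (Real.exp (-(b * x)) * -(b * 1)) x :=
    (((hasDerivAt_id x).const_mul b).neg).exp
  have h2 := (h.div_const b).neg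
  refine h2.congr_deriv ?_
  field_simp

lemma cont_exp_mul (b : ℝ) : Continuous (fun x : ℝ => Real.exp (b * x)) :=
  Real.continuous_exp.comp (continuous_const.mul continuous_id)

lemma cont_exp_neg_mul (b : ℝ) : Continuous (fun x : ℝ => Real.exp (-(b * x))) :=
  Real.continuous_exp.comp (continuous_const.mul continuous_id).neg

lemma integrableOn_exp_mul_Iic' {b : ℝ} (hb : 0 < b) (c : ℝ) :
    IntegrableOn (fun x : ℝ => Real.exp (b * x)) (Iic c) := by
  refine integrableOn_Iic_of_intervalIntegral_norm_bounded (Real.exp (b*c)/b) c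
    (fun i => ((cont_exp_mul b).intervalIntegrable i c).1) tendsto_id ?_
  refine Eventually.of_forall (fun y => ?_)
  have key : ∫ x in y..c, Real.exp (b*x) = Real.exp (b*c)/b - Real.exp (b*y)/b :=
    intervalIntegral.integral_eq_sub_of_hasDerivAt (fun t _ => hasDerivAt_exp_mul b t hb.ne')
      ((cont_exp_mul b).intervalIntegrable y c)
  simp only [Real.norm_eq_abs, Real.abs_exp]
  rw [key]
  have h1 := div_nonneg (Real.exp_pos (b*y)).le hb.le
  linarith

lemma integral_exp_mul_Iic' {b : ℝ} (hb : 0 < b) (c : ℝ) :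
    ∫ x in Iic c, Real.exp (b*x) = Real.exp (b*c) / b := by
  have htend : Tendsto (fun y : ℝ => Real.exp (b*y)/b) atBot (𝓝 0) := by
    have h1 : Tendsto (fun x : ℝ => b*x) atBot atBot :=
      (tendsto_const_mul_atBot_of_pos hb).mpr tendsto_id
    have h2 := (Real.tendsto_exp_atBot.comp h1).div_const b
    simpa using h2
  have := integral_Iic_of_hasDerivAt_of_tendsto' (f := fun y => Real.exp (b*y)/b)
    (fun x _ => hasDerivAt_exp_mul b x hb.ne') (integrableOn_exp_mul_Iic' hb c) htend
  simpa using this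

lemma integrableOn_exp_neg_mul_Ioi {b : ℝ} (hb : 0 < b) (c : ℝ) :
    IntegrableOn (fun x : ℝ => Real.exp (-(b * x))) (Ioi c) := by
  refine integrableOn_Ioi_of_intervalIntegral_norm_bounded (Real.exp (-(b*c))/b) c
    (fun i => ((cont_exp_neg_mul b).intervalIntegrable c i).1) tendsto_id ?_
  refine Eventually.of_forall (fun y => ?_)
  have key : ∫ x in c..y, Real.exp (-(b*x)) = -(Real.exp (-(b*y))/b) - -(Real.exp (-(b*c))/b) :=
    intervalIntegral.integral_eq_sub_of_hasDerivAt (fun t _ => hasDerivAt_exp_neg_mul b t hb.ne')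
      ((cont_exp_neg_mul b).intervalIntegrable c y)
  simp only [Real.norm_eq_abs, Real.abs_exp]
  rw [key]
  have h1 := div_nonneg (Real.exp_pos (-(b*y))).le hb.le
  linarith

lemma integral_exp_neg_mul_Ioi {b : ℝ} (hb : 0 < b) (c : ℝ) :
    ∫ x in Ioi c, Real.exp (-(b*x)) = Real.exp (-(b*c)) / b := by
  have htend : Tendsto (fun y : ℝ => -(Real.exp (-(b*y))/b)) atTop (𝓝 0) := by
    have h1 : Tendsto (fun x : ℝ => -(b*x)) atTop atBot := by
      have := (tendsto_const_mul_atTop_of_pos hb).mpr tendsto_id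
      exact tendsto_neg_atTop_atBot.comp this
    have h2 := ((Real.tendsto_exp_atBot.comp h1).div_const b).neg
    simpa using h2
  have := integral_Ioi_of_hasDerivAt_of_tendsto' (f := fun y => -(Real.exp (-(b*y))/b))
    (fun x _ => hasDerivAt_exp_neg_mul b x hb.ne') (integrableOn_exp_neg_mul_Ioi hb c) htend
  simpa using this

lemma integral_middle {b : ℝ} (hb : b ≠ 0) :
    ∫ x in (-1:ℝ)..1, (Real.exp (b*x) + Real.exp (-(b*x))) =
      (Real.exp b - Real.exp (-b)) * 2 / b := by
  have key := intervalIntegral.integral_eq_sub_of_hasDerivAt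
    (f := fun y => Real.exp (b*y)/b + -(Real.exp (-(b*y))/b))
    (f' := fun y => Real.exp (b*y) + Real.exp (-(b*y)))
    (fun t _ => (hasDerivAt_exp_mul b t hb).add (hasDerivAt_exp_neg_mul b t hb))
    (((cont_exp_mul b).add (cont_exp_neg_mul b)).intervalIntegrable (-1) 1)
  rw [key]
  norm_num
  field_simp
  ring

lemma pointwise_eq (γ : ℝ) (x : ℝ) (h1 : x ≠ -1) (h2 : x ≠ 1) :
    deriv (fun x => Real.exp (-γ * |x - 1|) + Real.exp (-γ * |x + 1|)) x ^ 2
      + γ^2 * (fun x => Real.exp (-γ * |x - 1|) + Real.exp (-γ * |x + 1|)) x ^ 2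
      = Ffun γ x := by
  rcases lt_trichotomy x (-1) with hx | hx | hx
  · -- left region
    have hev : (fun x => Real.exp (-γ * |x - 1|) + Real.exp (-γ * |x + 1|)) =ᶠ[nhds x]
        (fun y => (Real.exp (-γ) + Real.exp γ) * Real.exp (γ * y)) := by
      filter_upwards [Iio_mem_nhds hx] with y hy
      have hy' : y < -1 := hy
      rw [abs_of_neg (by linarith : y - 1 < 0), abs_of_neg (by linarith : y + 1 < 0),
        show -γ * -(y-1) = γ*y + -γ by ring, show -γ * -(y+1) = γ*y + γ by ring,
        Real.exp_add, Real.exp_add]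
      ring
    rw [hev.deriv_eq]
    have hd : HasDerivAt (fun y => (Real.exp (-γ) + Real.exp γ) * Real.exp (γ * y))
        ((Real.exp (-γ) + Real.exp γ) * (Real.exp (γ * x) * (γ * 1))) x :=
      (((hasDerivAt_id x).const_mul γ).exp).const_mul _
    rw [hd.deriv]
    simp only
    rw [abs_of_neg (by linarith : x - 1 < 0), abs_of_neg (by linarith : x + 1 < 0),
      show -γ * -(x-1) = γ*x + -γ by ring, show -γ * -(x+1) = γ*x + γ by ring,
      Real.exp_add, Real.exp_add]
    simp only [Ffun, if_pos hx.le]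
    rw [show 2*γ*x = γ*x + (γ*x) by ring, Real.exp_add]
    ring
  · exact absurd hx h1
  · rcases lt_trichotomy x 1 with hx' | hx' | hx'
    · -- middle region
      have hev : (fun x => Real.exp (-γ * |x - 1|) + Real.exp (-γ * |x + 1|)) =ᶠ[nhds x]
          (fun y => Real.exp (-γ) * (Real.exp (γ * y) + Real.exp (-(γ * y)))) := by
        filter_upwards [Ioo_mem_nhds hx hx'] with y hy
        rw [abs_of_neg (by linarith [hy.2] : y - 1 < 0),
          abs_of_pos (by linarith [hy.1] : (0:ℝ) < y + 1),
          show -γ * -(y-1) = γ*y + -γ by ring, show -γ * (y+1) = -(γ*y) + -γ by ring,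
          Real.exp_add, Real.exp_add]
        ring
      rw [hev.deriv_eq]
      have hd : HasDerivAt (fun y => Real.exp (-γ) * (Real.exp (γ * y) + Real.exp (-(γ * y))))
          (Real.exp (-γ) * (Real.exp (γ * x) * (γ * 1) + Real.exp (-(γ * x)) * -(γ * 1))) x :=
        ((((hasDerivAt_id x).const_mul γ).exp).add
          ((((hasDerivAt_id x).const_mul γ).neg).exp)).const_mul _
      rw [hd.deriv]
      simp only
      rw [abs_of_neg (by linarith : x - 1 < 0), abs_of_pos (by linarith : (0:ℝ) < x + 1),
        show -γ * -(x-1) = γ*x + -γ by ring, show -γ * (x+1) = -(γ*x) + -γ by ring,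
        Real.exp_add, Real.exp_add]
      simp only [Ffun, if_neg (by linarith : ¬ x ≤ -1), if_pos hx'.le]
      rw [show 2*γ*x = γ*x + (γ*x) by ring, Real.exp_add,
        show -(γ*x + γ*x) = -(γ*x) + -(γ*x) by ring, Real.exp_add]
      ring
    · exact absurd hx' h2
    · -- right region
      have hev : (fun x => Real.exp (-γ * |x - 1|) + Real.exp (-γ * |x + 1|)) =ᶠ[nhds x]
          (fun y => (Real.exp (-γ) + Real.exp γ) * Real.exp (-(γ * y))) := by
        filter_upwards [Ioi_mem_nhds hx'] with y hy
        have hy' : (1:ℝ) < y := hy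
        rw [abs_of_pos (by linarith : (0:ℝ) < y - 1), abs_of_pos (by linarith : (0:ℝ) < y + 1),
          show -γ * (y-1) = -(γ*y) + γ by ring, show -γ * (y+1) = -(γ*y) + -γ by ring,
          Real.exp_add, Real.exp_add]
        ring
      rw [hev.deriv_eq]
      have hd : HasDerivAt (fun y => (Real.exp (-γ) + Real.exp γ) * Real.exp (-(γ * y)))
          ((Real.exp (-γ) + Real.exp γ) * (Real.exp (-(γ * x)) * -(γ * 1))) x :=
        ((((hasDerivAt_id x).const_mul γ).neg).exp).const_mul _
      rw [hd.deriv]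
      simp only
      rw [abs_of_pos (by linarith : (0:ℝ) < x - 1), abs_of_pos (by linarith : (0:ℝ) < x + 1),
        show -γ * (x-1) = -(γ*x) + γ by ring, show -γ * (x+1) = -(γ*x) + -γ by ring,
        Real.exp_add, Real.exp_add]
      simp only [Ffun, if_neg (by linarith : ¬ x ≤ -1), if_neg (by linarith : ¬ x ≤ 1)]
      rw [show -(2*γ*x) = -(γ*x) + -(γ*x) by ring, Real.exp_add]
      ring

/-- Sharpness of the trace inequality: equality is attained by
`v(x) = e^{-γ|x-1|} + e^{-γ|x+1|}`. -/
theorem stmt_4 (γ : ℝ) (hγ : 0 < γ)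
    (v : ℝ → ℝ)
    (hv : v = fun x => Real.exp (-γ * |x - 1|) + Real.exp (-γ * |x + 1|)) :
    2 * γ * (v (-1) ^ 2 + v 1 ^ 2) =
      (1 + Real.exp (-2 * γ)) * ∫ x : ℝ, (deriv v x ^ 2 + γ ^ 2 * v x ^ 2) := by
  have hb : (0:ℝ) < 2*γ := by linarith
  -- a.e. equality of the integrand with Ffun γ
  have hae : (fun x => deriv v x ^ 2 + γ ^ 2 * v x ^ 2) =ᵐ[volume] Ffun γ := by
    have hsub : {x : ℝ | ¬ (deriv v x ^ 2 + γ ^ 2 * v x ^ 2 = Ffun γ x)} ⊆ ({-1, 1} : Set ℝ) := by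
      intro x hx
      by_contra hmem
      simp only [mem_insert_iff, mem_singleton_iff, not_or] at hmem
      exact hx (by rw [hv]; exact pointwise_eq γ x hmem.1 hmem.2)
    exact measure_mono_null hsub (Set.Finite.measure_zero (by
      exact (Set.finite_singleton (1:ℝ)).insert (-1)) volume)
  -- integrability of Ffun on pieces
  have hIic : IntegrableOn (Ffun γ) (Iic (-1)) := by
    refine IntegrableOn.congr_fun ((integrableOn_exp_mul_Iic' hb (-1)).const_mul
      (2*γ^2*(Real.exp (-γ) + Real.exp γ)^2)) ?_ measurableSet_Iic
    intro x hx
    have hx' : x ≤ -1 := hx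
    simp only [Ffun]
    rw [if_pos hx']
  have hmid : IntegrableOn (Ffun γ) (Ioc (-1) 1) := by
    have hc : Continuous (fun x : ℝ => (2*γ^2*Real.exp (-γ)^2) *
        (Real.exp (2*γ*x) + Real.exp (-(2*γ*x)))) :=
      continuous_const.mul ((cont_exp_mul (2*γ)).add (cont_exp_neg_mul (2*γ)))
    refine IntegrableOn.congr_fun hc.integrableOn_Ioc ?_ measurableSet_Ioc
    intro x hx
    simp only [Ffun]
    rw [if_neg (by linarith [hx.1] : ¬ x ≤ -1), if_pos hx.2]
  have hIoi : IntegrableOn (Ffun γ) (Ioi 1) := by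
    refine IntegrableOn.congr_fun ((integrableOn_exp_neg_mul_Ioi hb 1).const_mul
      (2*γ^2*(Real.exp (-γ) + Real.exp γ)^2)) ?_ measurableSet_Ioi
    intro x hx
    have hx' : (1:ℝ) < x := hx
    simp only [Ffun]
    rw [if_neg (by linarith : ¬ x ≤ -1), if_neg (not_le.mpr hx')]
  -- compute the integral of Ffun
  have hsplit2 : ∫ x in Ioi (-1:ℝ), Ffun γ x
      = (∫ x in Ioc (-1:ℝ) 1, Ffun γ x) + ∫ x in Ioi (1:ℝ), Ffun γ x := by
    rw [← setIntegral_union (Ioc_disjoint_Ioi le_rfl) measurableSet_Ioi hmid hIoi,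
      Ioc_union_Ioi_eq_Ioi (by norm_num : (-1:ℝ) ≤ 1)]
  have hsplit : ∫ x : ℝ, Ffun γ x
      = (∫ x in Iic (-1:ℝ), Ffun γ x) + ((∫ x in Ioc (-1:ℝ) 1, Ffun γ x)
        + ∫ x in Ioi (1:ℝ), Ffun γ x) := by
    rw [← hsplit2, intervalIntegral.integral_Iic_add_Ioi hIic ((hmid.union hIoi).mono_set
      (by rw [Ioc_union_Ioi_eq_Ioi (by norm_num : (-1:ℝ) ≤ 1)]))]
  have hI1 : ∫ x in Iic (-1:ℝ), Ffun γ x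
      = (2*γ^2*(Real.exp (-γ) + Real.exp γ)^2) * (Real.exp (2*γ*(-1)) / (2*γ)) := by
    have e1 : EqOn (Ffun γ)
        (fun x => (2*γ^2*(Real.exp (-γ) + Real.exp γ)^2) * Real.exp (2*γ*x)) (Iic (-1)) := by
      intro x hx
      have hx' : x ≤ -1 := hx
      simp only [Ffun]
      rw [if_pos hx']
    rw [setIntegral_congr_fun measurableSet_Iic e1, integral_const_mul,
      integral_exp_mul_Iic' hb]
  have hI3 : ∫ x in Ioi (1:ℝ), Ffun γ x
      = (2*γ^2*(Real.exp (-γ) + Real.exp γ)^2) * (Real.exp (-(2*γ*1)) / (2*γ)) := by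
    have e3 : EqOn (Ffun γ)
        (fun x => (2*γ^2*(Real.exp (-γ) + Real.exp γ)^2) * Real.exp (-(2*γ*x))) (Ioi 1) := by
      intro x hx
      have hx' : (1:ℝ) < x := hx
      simp only [Ffun]
      rw [if_neg (by linarith : ¬ x ≤ -1), if_neg (not_le.mpr hx')]
    rw [setIntegral_congr_fun measurableSet_Ioi e3, integral_const_mul,
      integral_exp_neg_mul_Ioi hb]
  have hI2 : ∫ x in Ioc (-1:ℝ) 1, Ffun γ x
      = (2*γ^2*Real.exp (-γ)^2) * ((Real.exp (2*γ) - Real.exp (-(2*γ))) * 2 / (2*γ)) := by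
    have e2 : EqOn (Ffun γ)
        (fun x => (2*γ^2*Real.exp (-γ)^2) * (Real.exp (2*γ*x) + Real.exp (-(2*γ*x))))
        (Ioc (-1) 1) := by
      intro x hx
      simp only [Ffun]
      rw [if_neg (by linarith [hx.1] : ¬ x ≤ -1), if_pos hx.2]
    rw [setIntegral_congr_fun measurableSet_Ioc e2, integral_const_mul,
      ← intervalIntegral.integral_of_le (by norm_num : (-1:ℝ) ≤ 1),
      integral_middle hb.ne']
  -- put everything together
  rw [MeasureTheory.integral_congr_ae hae, hsplit, hI1, hI2, hI3, hv]
  simp only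
  rw [show (-1:ℝ) - 1 = -2 by norm_num, show (-1:ℝ) + 1 = 0 by norm_num,
    show (1:ℝ) - 1 = 0 by norm_num, show (1:ℝ) + 1 = 2 by norm_num]
  rw [abs_of_nonpos (by norm_num : (-2:ℝ) ≤ 0), abs_of_nonneg (by norm_num : (0:ℝ) ≤ 2),
    abs_zero]
  rw [show -γ * -(-2:ℝ) = -(2*γ) by ring, show -γ * (2:ℝ) = -(2*γ) by ring,
    show -γ * (0:ℝ) = 0 by ring, Real.exp_zero]
  rw [show (2:ℝ)*γ*(-1) = -(2*γ) by ring, show -((2:ℝ)*γ*1) = -(2*γ) by ring,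
    show (-2:ℝ)*γ = -(2*γ) by ring]
  rw [show ((2:ℝ)*γ) = γ + γ by ring, show -(γ + γ) = -γ + -γ by ring,
    Real.exp_add, Real.exp_add]
  rw [Real.exp_neg]
  have h0 : Real.exp γ ≠ 0 := Real.exp_ne_zero γ
  field_simp
  ring
end

section
/- Let γ > 0 and let u ∈ H^1(ℝ). Let v be the unique element of F_γ (the span of e^{-γ|x-1|} and e^{-γ|x+1|}) with v(1) = u(1) and v(-1) = u(-1). Then u - v is orthogonal to F_γ in the inner product (u₁,u₂)_γ = ∫_ℝ (u₁' u₂' + γ² u₁ u₂) dx; i.e., v is the orthogonal projection of u onto F_γ in H^1_γ. -/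
open MeasureTheory

open Set Filter
open MeasureTheory Set Filter

lemma expIntOn (γ : ℝ) (hγ : 0 < γ) (p : ℝ) :
    IntegrableOn (fun x => Real.exp (-γ * |x - p|)) (Ioi p) := by
  have h : IntegrableOn (fun x => Real.exp (γ * p) * Real.exp (-γ * x)) (Ioi p) :=
    (exp_neg_integrableOn_Ioi p hγ).const_mul (Real.exp (γ * p))
  apply h.congr_fun ?_ measurableSet_Ioi
  intro x hx
  simp only
  rw [← Real.exp_add, abs_of_pos (by simpa using (mem_Ioi.mp hx))]
  ring_nf

lemma expInt (γ : ℝ) (hγ : 0 < γ) (p : ℝ) :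
    Integrable (fun x => Real.exp (-γ * |x - p|)) := by
  rw [← integrableOn_univ, ← Iic_union_Ioi (a := p)]
  refine IntegrableOn.union ?_ (expIntOn γ hγ p)
  have h1 : IntegrableOn (fun x => Real.exp (-γ * |x - (-p)|)) (Ici (-p)) := by
    rw [integrableOn_Ici_iff_integrableOn_Ioi]
    exact expIntOn γ hγ (-p)
  have h2 := (MeasurePreserving.integrableOn_comp_preimage
    (Measure.measurePreserving_neg (volume : Measure ℝ))
    (Homeomorph.neg ℝ).measurableEmbedding).2 h1
  have hs : (fun x : ℝ => -x) ⁻¹' (Ici (-p)) = Iic p := by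
    ext x; simp
  rw [hs] at h2
  apply h2.congr_fun ?_ measurableSet_Iic
  intro x _
  simp only [Function.comp]
  congr 1
  rw [show -x - -p = -(x - p) by ring, abs_neg]

lemma expSqInt (γ : ℝ) (hγ : 0 < γ) (p : ℝ) :
    Integrable (fun x => Real.exp (-γ * |x - p|) ^ 2) := by
  refine (expInt (2*γ) (by linarith) p).congr ?_
  filter_upwards with x
  rw [sq, ← Real.exp_add]
  ring_nf

lemma L2mul (f g : ℝ → ℝ) (hf : AEStronglyMeasurable f volume)
    (hg : AEStronglyMeasurable g volume)
    (hf2 : Integrable (fun x => f x ^ 2)) (hg2 : Integrable (fun x => g x ^ 2)) :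
    Integrable (fun x => f x * g x) := by
  refine Integrable.mono' ((hf2.add hg2).const_mul (1/2)) (hf.mul hg) ?_
  filter_upwards with x
  simp only [Pi.add_apply]
  rw [Real.norm_eq_abs, abs_mul]
  nlinarith [sq_nonneg (|f x| - |g x|), sq_abs (f x), sq_abs (g x), abs_nonneg (f x), abs_nonneg (g x)]

lemma L2add (f g : ℝ → ℝ) (hf : AEStronglyMeasurable f volume)
    (hg : AEStronglyMeasurable g volume)
    (hf2 : Integrable (fun x => f x ^ 2)) (hg2 : Integrable (fun x => g x ^ 2)) :
    Integrable (fun x => (f x + g x) ^ 2) := by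
  have h := (hf2.add hg2).add ((L2mul f g hf hg hf2 hg2).const_mul 2)
  refine h.congr ?_
  filter_upwards with x
  simp only [Pi.add_apply, Pi.sub_apply]
  ring

lemma L2sub (f g : ℝ → ℝ) (hf : AEStronglyMeasurable f volume)
    (hg : AEStronglyMeasurable g volume)
    (hf2 : Integrable (fun x => f x ^ 2)) (hg2 : Integrable (fun x => g x ^ 2)) :
    Integrable (fun x => (f x - g x) ^ 2) := by
  have h := (hf2.add hg2).sub ((L2mul f g hf hg hf2 hg2).const_mul 2)
  refine h.congr ?_
  filter_upwards with x
  simp only [Pi.add_apply, Pi.sub_apply]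
  ring

lemma expDeriv (γ : ℝ) (p x : ℝ) (hx : x ≠ p) :
    HasDerivAt (fun y => Real.exp (-γ * |y - p|))
      ((if x < p then γ else -γ) * Real.exp (-γ * |x - p|)) x := by
  rcases lt_or_gt_of_ne hx with h | h
  · have h0 : HasDerivAt (fun y : ℝ => γ * (y - p)) γ x := by
      simpa using ((hasDerivAt_id x).sub_const p).const_mul γ
    have h1 := h0.exp
    have heq : (fun y => Real.exp (γ * (y - p))) =ᶠ[nhds x] (fun y => Real.exp (-γ * |y - p|)) := by
      filter_upwards [Iio_mem_nhds h] with y hy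
      rw [abs_of_neg (sub_neg.mpr hy)]
      ring_nf
    have h2 := h1.congr_of_eventuallyEq heq.symm
    rw [if_pos h, abs_of_neg (sub_neg.mpr h)]
    refine h2.congr_deriv ?_
    ring_nf
  · have h0 : HasDerivAt (fun y : ℝ => -γ * (y - p)) (-γ) x := by
      simpa using ((hasDerivAt_id x).sub_const p).const_mul (-γ)
    have h1 := h0.exp
    have heq : (fun y => Real.exp (-γ * (y - p))) =ᶠ[nhds x] (fun y => Real.exp (-γ * |y - p|)) := by
      filter_upwards [Ioi_mem_nhds h] with y hy
      rw [abs_of_pos (sub_pos.mpr hy)]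
    have h2 := h1.congr_of_eventuallyEq heq.symm
    rw [if_neg (not_lt.mpr h.le), abs_of_pos (sub_pos.mpr h)]
    refine h2.congr_deriv ?_
    ring_nf

lemma expCont (γ p : ℝ) : Continuous (fun x => Real.exp (-γ * |x - p|)) :=
  Real.continuous_exp.comp (continuous_const.mul ((continuous_id.sub continuous_const).abs))

lemma key (γ : ℝ) (hγ : 0 < γ) (α β p : ℝ) (hαβ : α < β) (hp : p = α ∨ p = β)
    (f f' : ℝ → ℝ) (hfc : Continuous f)
    (hd : ∀ x, x ≠ α → x ≠ β → HasDerivAt f (f' x) x)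
    (hf2 : Integrable (fun x => f x ^ 2)) (hf'2 : Integrable (fun x => f' x ^ 2))
    (hf'm : AEStronglyMeasurable f' volume) :
    (∫ x, (f' x * ((if x < p then γ else -γ) * Real.exp (-γ * |x - p|)) +
      γ ^ 2 * f x * Real.exp (-γ * |x - p|))) = 2 * γ * f p := by
  set g : ℝ → ℝ := fun x => Real.exp (-γ * |x - p|) with hg
  set F : ℝ → ℝ := fun x => f x * g x with hF
  set h : ℝ → ℝ := fun x => f' x * ((if x < p then γ else -γ) * g x) + γ ^ 2 * f x * g x with hh
  have hαp : α ≤ p := by rcases hp with hq | hq <;> rw [hq]; exact hαβ.le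
  have hpβ : p ≤ β := by
    rcases hp with hq | hq
    · rw [hq]; exact hαβ.le
    · rw [hq]
  have hgc : Continuous g := expCont γ p
  have hg2 : Integrable (fun x => g x ^ 2) := expSqInt γ hγ p
  have int_fg : Integrable (fun x => f x * g x) :=
    L2mul f g hfc.aestronglyMeasurable hgc.aestronglyMeasurable hf2 hg2
  have int_f'g : Integrable (fun x => f' x * g x) :=
    L2mul f' g hf'm hgc.aestronglyMeasurable hf'2 hg2
  have hFc : Continuous F := hfc.mul hgc
  have hFd : ∀ x, x ≠ α → x ≠ β → HasDerivAt F
      (f' x * g x + f x * ((if x < p then γ else -γ) * g x)) x := by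
    intro x h1 h2
    have hxp : x ≠ p := by rcases hp with hq | hq <;> rw [hq] <;> assumption
    exact (hd x h1 h2).mul (expDeriv γ p x hxp)
  have intD : ∀ σ : ℝ, Integrable (fun x => f' x * g x + σ * (f x * g x)) :=
    fun σ => int_f'g.add (int_fg.const_mul σ)
  have htop : Tendsto F atTop (nhds 0) := by
    apply tendsto_zero_of_hasDerivAt_of_integrableOn_Ioi (a := β)
      (f' := fun x => f' x * g x + (-γ) * (f x * g x))
    · intro x hx
      have hx' : β < x := hx
      have := hFd x (ne_of_gt (lt_trans hαβ hx')) (ne_of_gt hx')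
      rw [if_neg (not_lt.mpr (le_trans hpβ hx'.le))] at this
      exact this.congr_deriv (by ring)
    · exact (intD (-γ)).integrableOn
    · exact int_fg.integrableOn
  have hbot : Tendsto F atBot (nhds 0) := by
    apply tendsto_zero_of_hasDerivAt_of_integrableOn_Iic (a := α - 1)
      (f' := fun x => f' x * g x + γ * (f x * g x))
    · intro x hx
      have hx' : x < α := lt_of_le_of_lt (mem_Iic.mp hx) (by linarith)
      have := hFd x (ne_of_lt hx') (ne_of_lt (lt_trans hx' hαβ))
      rw [if_pos (lt_of_lt_of_le hx' hαp)] at this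
      exact this.congr_deriv (by ring)
    · exact (intD γ).integrableOn
    · exact int_fg.integrableOn
  -- Piece A : Iic α
  have hA : (∫ x in Iic α, h x) = γ * F α := by
    have hFTC : (∫ x in Iic α, (f' x * g x + γ * (f x * g x))) = F α - 0 := by
      apply integral_Iic_of_hasDerivAt_of_tendsto hFc.continuousWithinAt ?_
        (intD γ).integrableOn hbot
      intro x hx
      have hx' : x < α := hx
      have := hFd x (ne_of_lt hx') (ne_of_lt (lt_trans hx' hαβ))
      rw [if_pos (lt_of_lt_of_le hx' hαp)] at this
      exact this.congr_deriv (by ring)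
    rw [sub_zero] at hFTC
    rw [integral_Iic_eq_integral_Iio]
    have e : (∫ x in Iio α, h x) = ∫ x in Iio α, γ * (f' x * g x + γ * (f x * g x)) := by
      apply setIntegral_congr_fun measurableSet_Iio
      intro x hx
      simp only [hh]
      rw [if_pos (lt_of_lt_of_le (mem_Iio.mp hx) hαp)]
      ring
    rw [e, integral_const_mul, ← integral_Iic_eq_integral_Iio, hFTC]
  -- Piece C : Ioi β
  have hC : (∫ x in Ioi β, h x) = γ * F β := by
    have hFTC : (∫ x in Ioi β, (f' x * g x + (-γ) * (f x * g x))) = 0 - F β := by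
      apply integral_Ioi_of_hasDerivAt_of_tendsto hFc.continuousWithinAt ?_
        (intD (-γ)).integrableOn htop
      intro x hx
      have hx' : β < x := hx
      have := hFd x (ne_of_gt (lt_trans hαβ hx')) (ne_of_gt hx')
      rw [if_neg (not_lt.mpr (le_trans hpβ hx'.le))] at this
      exact this.congr_deriv (by ring)
    have e : (∫ x in Ioi β, h x) = ∫ x in Ioi β, (-γ) * (f' x * g x + (-γ) * (f x * g x)) := by
      apply setIntegral_congr_fun measurableSet_Ioi
      intro x hx
      simp only [hh]
      rw [if_neg (not_lt.mpr (le_trans hpβ (mem_Ioi.mp hx).le))]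
      ring
    rw [e, integral_const_mul, hFTC]
    ring
  -- Piece B : Ioc α β
  set σ : ℝ := if p = β then γ else -γ with hσ
  have hσ2 : σ * σ = γ * γ := by rw [hσ]; split_ifs <;> ring
  have hmid : ∀ x ∈ Ioo α β, (if x < p then γ else -γ) = σ := by
    intro x hx
    rcases hp with hq | hq
    · rw [if_neg (not_lt.mpr (hq ▸ hx.1.le)), hσ, if_neg (by rw [hq]; exact ne_of_lt hαβ)]
    · rw [if_pos (hq ▸ hx.2), hσ, if_pos hq]
  have hB : (∫ x in Ioc α β, h x) = σ * (F β - F α) := by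
    have hFTC : (∫ x in α..β, (f' x * g x + σ * (f x * g x))) = F β - F α := by
      apply intervalIntegral.integral_eq_sub_of_hasDerivAt_of_le hαβ.le
        hFc.continuousOn ?_ (intD σ).intervalIntegrable
      intro x hx
      have := hFd x (ne_of_gt hx.1) (ne_of_lt hx.2)
      rw [hmid x hx] at this
      exact this.congr_deriv (by ring)
    rw [intervalIntegral.integral_of_le hαβ.le, integral_Ioc_eq_integral_Ioo] at hFTC
    rw [integral_Ioc_eq_integral_Ioo]
    have e : (∫ x in Ioo α β, h x) = ∫ x in Ioo α β, σ * (f' x * g x + σ * (f x * g x)) := by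
      apply setIntegral_congr_fun measurableSet_Ioo
      intro x hx
      simp only [hh]
      rw [hmid x hx]
      linear_combination (-(f x * g x)) * hσ2
    rw [e, integral_const_mul, hFTC]
  -- integrability of h
  have hcoefm : AEStronglyMeasurable (fun x : ℝ => (if x < p then γ else -γ) * g x) volume := by
    exact ((Measurable.ite measurableSet_Iio measurable_const measurable_const).mul
      hgc.measurable).aestronglyMeasurable
  have hcoef2 : Integrable (fun x : ℝ => ((if x < p then γ else -γ) * g x) ^ 2) := by
    refine (hg2.const_mul (γ ^ 2)).congr ?_
    filter_upwards with x
    split_ifs <;> ring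
  have hInt : Integrable h := by
    refine Integrable.add (L2mul _ _ hf'm hcoefm hf'2 hcoef2) ?_
    refine (int_fg.const_mul (γ ^ 2)).congr ?_
    filter_upwards with x
    ring
  have split2 : (∫ x in Ioc α β, h x) + (∫ x in Ioi β, h x) = ∫ x in Ioi α, h x := by
    rw [← setIntegral_union (Ioc_disjoint_Ioi le_rfl) measurableSet_Ioi
      hInt.integrableOn hInt.integrableOn, Ioc_union_Ioi_eq_Ioi hαβ.le]
  have gp : g p = 1 := by rw [hg]; simp
  calc (∫ x, h x) = (∫ x in Iic α, h x) + ∫ x in Ioi α, h x :=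
        (intervalIntegral.integral_Iic_add_Ioi hInt.integrableOn hInt.integrableOn).symm
    _ = (∫ x in Iic α, h x) + ((∫ x in Ioc α β, h x) + ∫ x in Ioi β, h x) := by rw [split2]
    _ = γ * F α + (σ * (F β - F α) + γ * F β) := by rw [hA, hB, hC]
    _ = 2 * γ * f p := by
        rcases hp with hq | hq
        · have hσv : σ = -γ := by rw [hσ, if_neg (by rw [hq]; exact ne_of_lt hαβ)]
          rw [hσv, hq]
          have : F α = f α * 1 := by rw [hF]; simp only; rw [← hq, gp]
          rw [this]; ring
        · have hσv : σ = γ := by rw [hσ, if_pos hq]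
          rw [hσv, hq]
          have : F β = f β * 1 := by rw [hF]; simp only; rw [← hq, gp]
          rw [this]; ring

/-- The element `v ∈ F_γ` matching the boundary values `v(±1) = u(±1)` is the
orthogonal projection of `u` onto `F_γ` in `H¹_γ`: `u - v` is `(·,·)_γ`-orthogonal
to every `w ∈ F_γ`. -/
theorem stmt_19 (γ : ℝ) (hγ : 0 < γ) (u u' : ℝ → ℝ)
    (hderiv : ∀ x, HasDerivAt u (u' x) x)
    (hu : Integrable (fun x => u x ^ 2))
    (hu' : Integrable (fun x => u' x ^ 2))
    (a b : ℝ) (v : ℝ → ℝ)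
    (hv : v = fun x => a * Real.exp (-γ * |x - 1|) + b * Real.exp (-γ * |x + 1|))
    (hv1 : v 1 = u 1) (hvm1 : v (-1) = u (-1)) :
    ∀ w : ℝ → ℝ,
      (∃ c d : ℝ, w = fun x =>
        c * Real.exp (-γ * |x - 1|) + d * Real.exp (-γ * |x + 1|)) →
      (∫ x : ℝ, ((u' x - deriv v x) * deriv w x +
        γ ^ 2 * (u x - v x) * w x)) = 0 := by
  intro w hwex
  obtain ⟨c, d, hw⟩ := hwex
  have habs : ∀ x : ℝ, |x + 1| = |x - (-1)| := fun x => by norm_num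
  -- abbreviations (plain functions)
  let E1 : ℝ → ℝ := fun x => Real.exp (-γ * |x - 1|)
  let E2 : ℝ → ℝ := fun x => Real.exp (-γ * |x - (-1)|)
  let G1 : ℝ → ℝ := fun x => (if x < 1 then γ else -γ) * E1 x
  let G2 : ℝ → ℝ := fun x => (if x < (-1 : ℝ) then γ else -γ) * E2 x
  have hvfun : v = fun x => a * E1 x + b * E2 x := by
    rw [hv]; funext x; rw [habs x]
  have hwfun : w = fun x => c * E1 x + d * E2 x := by
    rw [hw]; funext x; rw [habs x]
  -- derivatives
  have hvd : ∀ x : ℝ, x ≠ 1 → x ≠ -1 → HasDerivAt v (a * G1 x + b * G2 x) x := by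
    intro x h1 h2
    rw [hvfun]
    exact ((expDeriv γ 1 x h1).const_mul a).add ((expDeriv γ (-1) x h2).const_mul b)
  have hwd : ∀ x : ℝ, x ≠ 1 → x ≠ -1 → HasDerivAt w (c * G1 x + d * G2 x) x := by
    intro x h1 h2
    rw [hwfun]
    exact ((expDeriv γ 1 x h1).const_mul c).add ((expDeriv γ (-1) x h2).const_mul d)
  -- measurability / integrability
  have hucont : Continuous u := continuous_iff_continuousAt.2 fun x => (hderiv x).continuousAt
  have hu'm : AEStronglyMeasurable u' volume := by
    have : u' = deriv u := funext fun x => ((hderiv x).deriv).symm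
    rw [this]
    exact (measurable_deriv u).aestronglyMeasurable
  have hE1c : Continuous E1 := expCont γ 1
  have hE2c : Continuous E2 := expCont γ (-1)
  have hE1sq : Integrable (fun x => E1 x ^ 2) := expSqInt γ hγ 1
  have hE2sq : Integrable (fun x => E2 x ^ 2) := expSqInt γ hγ (-1)
  have hG1m : AEStronglyMeasurable G1 volume :=
    ((Measurable.ite measurableSet_Iio measurable_const measurable_const).mul
      hE1c.measurable).aestronglyMeasurable
  have hG2m : AEStronglyMeasurable G2 volume :=
    ((Measurable.ite measurableSet_Iio measurable_const measurable_const).mul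
      hE2c.measurable).aestronglyMeasurable
  have hG1sq : Integrable (fun x => G1 x ^ 2) := by
    refine (hE1sq.const_mul (γ ^ 2)).congr ?_
    filter_upwards with x
    show γ ^ 2 * E1 x ^ 2 = ((if x < 1 then γ else -γ) * E1 x) ^ 2
    split_ifs <;> ring
  have hG2sq : Integrable (fun x => G2 x ^ 2) := by
    refine (hE2sq.const_mul (γ ^ 2)).congr ?_
    filter_upwards with x
    show γ ^ 2 * E2 x ^ 2 = ((if x < (-1 : ℝ) then γ else -γ) * E2 x) ^ 2
    split_ifs <;> ring
  have hvcont : Continuous v := by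
    rw [hvfun]
    exact (continuous_const.mul hE1c).add (continuous_const.mul hE2c)
  have hv2 : Integrable (fun x => v x ^ 2) := by
    rw [hvfun]
    refine L2add (fun x => a * E1 x) (fun x => b * E2 x)
      ((continuous_const.mul hE1c).aestronglyMeasurable)
      ((continuous_const.mul hE2c).aestronglyMeasurable)
      ((hE1sq.const_mul (a ^ 2)).congr ?_) ((hE2sq.const_mul (b ^ 2)).congr ?_)
    · filter_upwards with x; ring
    · filter_upwards with x; ring
  -- V' and its properties
  have hV'm : AEStronglyMeasurable (fun x => a * G1 x + b * G2 x) volume :=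
    ((hG1m.const_mul a).add (hG2m.const_mul b))
  have hV'2 : Integrable (fun x => (a * G1 x + b * G2 x) ^ 2) := by
    refine L2add (fun x => a * G1 x) (fun x => b * G2 x)
      (hG1m.const_mul a) (hG2m.const_mul b)
      ((hG1sq.const_mul (a ^ 2)).congr ?_) ((hG2sq.const_mul (b ^ 2)).congr ?_)
    · filter_upwards with x; ring
    · filter_upwards with x; ring
  -- the function f = u - v and its derivative
  have hfc : Continuous (fun x => u x - v x) := hucont.sub hvcont
  have hdf : ∀ x : ℝ, x ≠ -1 → x ≠ 1 →
      HasDerivAt (fun x => u x - v x) (u' x - (a * G1 x + b * G2 x)) x :=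
    fun x h1 h2 => (hderiv x).sub (hvd x h2 h1)
  have hf2 : Integrable (fun x => (u x - v x) ^ 2) :=
    L2sub u v hucont.aestronglyMeasurable hvcont.aestronglyMeasurable hu hv2
  have hf'2 : Integrable (fun x => (u' x - (a * G1 x + b * G2 x)) ^ 2) :=
    L2sub u' _ hu'm hV'm hu' hV'2
  have hf'm : AEStronglyMeasurable (fun x => u' x - (a * G1 x + b * G2 x)) volume :=
    hu'm.sub hV'm
  -- the two key computations
  have k1 := key γ hγ (-1) 1 1 (by norm_num) (Or.inr rfl)
    (fun x => u x - v x) (fun x => u' x - (a * G1 x + b * G2 x)) hfc hdf hf2 hf'2 hf'm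
  have k2 := key γ hγ (-1) 1 (-1) (by norm_num) (Or.inl rfl)
    (fun x => u x - v x) (fun x => u' x - (a * G1 x + b * G2 x)) hfc hdf hf2 hf'2 hf'm
  -- integrands h1, h2
  set h1 : ℝ → ℝ := fun x => (u' x - (a * G1 x + b * G2 x)) * G1 x +
    γ ^ 2 * (u x - v x) * E1 x with hh1
  set h2 : ℝ → ℝ := fun x => (u' x - (a * G1 x + b * G2 x)) * G2 x +
    γ ^ 2 * (u x - v x) * E2 x with hh2
  have inth1 : Integrable h1 := by
    refine Integrable.add (L2mul _ _ hf'm hG1m hf'2 hG1sq) ?_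
    refine ((L2mul (fun x => u x - v x) E1 hfc.aestronglyMeasurable
      hE1c.aestronglyMeasurable hf2 hE1sq).const_mul (γ ^ 2)).congr ?_
    filter_upwards with x; ring
  have inth2 : Integrable h2 := by
    refine Integrable.add (L2mul _ _ hf'm hG2m hf'2 hG2sq) ?_
    refine ((L2mul (fun x => u x - v x) E2 hfc.aestronglyMeasurable
      hE2c.aestronglyMeasurable hf2 hE2sq).const_mul (γ ^ 2)).congr ?_
    filter_upwards with x; ring
  have ik1 : (∫ x, h1 x) = 0 := by
    have e1 : (∫ x, h1 x) = 2 * γ * (u 1 - v 1) := k1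
    rw [e1, hv1, sub_self, mul_zero]
  have ik2 : (∫ x, h2 x) = 0 := by
    have e2 : (∫ x, h2 x) = 2 * γ * (u (-1) - v (-1)) := k2
    rw [e2, hvm1, sub_self, mul_zero]
  -- a.e. rewriting of the integrand
  have hne : ∀ p : ℝ, ∀ᵐ x : ℝ, x ≠ p := by
    intro p
    rw [ae_iff]
    simp only [not_not, setOf_eq_eq_singleton]
    exact measure_singleton p
  have hcongr : (fun x => (u' x - deriv v x) * deriv w x + γ ^ 2 * (u x - v x) * w x)
      =ᵐ[volume] fun x => c * h1 x + d * h2 x := by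
    filter_upwards [hne 1, hne (-1)] with x hx1 hx2
    rw [(hvd x hx1 hx2).deriv, (hwd x hx1 hx2).deriv]
    have hwx : w x = c * E1 x + d * E2 x := by rw [hwfun]
    rw [hwx, hh1, hh2]
    ring
  rw [integral_congr_ae hcongr, integral_add (inth1.const_mul c) (inth2.const_mul d),
    integral_const_mul, integral_const_mul, ik1, ik2]
  ring
end
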